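/- arXiv:2301.12494 — 2 statements merged into one kernel-verified Lean document; each statement's English description precedes it below -/
import Mathlib

section
/- For the standard quaternion-Kähler 4-form Ω on ℝ^8 and α = dx₂₈+dx₃₅, β = dx₁₅−dx₂₆ (both in Λ²₁₅), one has (α⋄Ω) ⌟₃ (β⋄Ω) = 32(−dx₁₃ + dx₆₈). -/
/- STATEMENT 7: For the standard QK 4-form Ω on ℝ^8 and α = dx₂₈+dx₃₅, β = dx₁₅−dx₂₆
(both in Λ²₁₅), one has (α⋄Ω) ⌟₃ (β⋄Ω) = 32(−dx₁₃ + dx₆₈)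
(indices shifted down by one in the formalization). -/

noncomputable section
open ExteriorAlgebra

/-- The standard coordinate 1-forms dx₁,…,dx₈ (indexed 0,…,7), modelled in the
exterior algebra of (ℝ^8)* ≅ ℝ^8. -/
def dx (i : Fin 8) : ExteriorAlgebra ℝ (Fin 8 → ℝ) :=
  ExteriorAlgebra.ι ℝ (Pi.single i 1)

def ω₁ : ExteriorAlgebra ℝ (Fin 8 → ℝ) :=
  dx 0 * dx 1 + dx 2 * dx 3 + dx 4 * dx 5 + dx 6 * dx 7

def ω₂ : ExteriorAlgebra ℝ (Fin 8 → ℝ) :=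
  dx 0 * dx 2 - dx 1 * dx 3 + dx 4 * dx 6 - dx 5 * dx 7

def ω₃ : ExteriorAlgebra ℝ (Fin 8 → ℝ) :=
  dx 0 * dx 3 + dx 1 * dx 2 + dx 4 * dx 7 + dx 5 * dx 6

/-- The standard quaternion-Kähler 4-form Ω = ½(ω₁²+ω₂²+ω₃²). -/
def Ω : ExteriorAlgebra ℝ (Fin 8 → ℝ) :=
  (1/2 : ℝ) • (ω₁ * ω₁ + ω₂ * ω₂ + ω₃ * ω₃)

/-- The standard volume form dx₁∧⋯∧dx₈. -/
def vol8 : ExteriorAlgebra ℝ (Fin 8 → ℝ) :=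
  dx 0 * dx 1 * dx 2 * dx 3 * dx 4 * dx 5 * dx 6 * dx 7

/-- Wedge product of the coordinate 1-forms indexed by a finite set, taken in
increasing order. -/
def wedgeOf (s : Finset (Fin 8)) : ExteriorAlgebra ℝ (Fin 8 → ℝ) :=
  ((s.sort (· ≤ ·)).map dx).prod

/-- `IsHodgeStar star` says that the linear map `star` is the Hodge star operator of the
Euclidean metric and the standard orientation on ℝ^8: on each increasing basis monomial
dx_S it equals ±dx_{Sᶜ}, with the sign fixed by dx_S ∧ ⋆(dx_S) = dx₁∧⋯∧dx₈ (since the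
basis monomials are orthonormal).  This characterizes ⋆ uniquely. -/
def IsHodgeStar
    (star : ExteriorAlgebra ℝ (Fin 8 → ℝ) →ₗ[ℝ] ExteriorAlgebra ℝ (Fin 8 → ℝ)) : Prop :=
  ∀ s : Finset (Fin 8), ∃ ε : ℝ, (ε = 1 ∨ ε = -1) ∧
    star (wedgeOf s) = ε • wedgeOf sᶜ ∧
    wedgeOf s * star (wedgeOf s) = wedgeOf Finset.univ

/-- Interior product (contraction) with the i-th standard basis vector of ℝ^8;
via the Euclidean metric this is left contraction with the i-th coordinate functional. -/
def ctr (i : Fin 8) :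
    ExteriorAlgebra ℝ (Fin 8 → ℝ) →ₗ[ℝ] ExteriorAlgebra ℝ (Fin 8 → ℝ) :=
  CliffordAlgebra.contractLeft (LinearMap.proj i)

/-- The diamond action of the simple 2-form dxᵢ∧dxⱼ on a form φ:
(a∧b)⋄φ := a∧(b♯⌟φ) − b∧(a♯⌟φ), where ♯ is the Euclidean sharp. -/
def dia2 (i j : Fin 8) (φ : ExteriorAlgebra ℝ (Fin 8 → ℝ)) :
    ExteriorAlgebra ℝ (Fin 8 → ℝ) :=
  dx i * ctr j φ - dx j * ctr i φ

/-- `IsTripleContractionInto κ T3` says that the linear map `T3` is the triple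
contraction operator σ ↦ σ ⌟₃ κ on 4-forms: on simple 4-forms a₁∧a₂∧a₃∧a₄ it is
a₁∧(a₂♯⌟a₃♯⌟a₄♯⌟κ) − a₂∧(a₁♯⌟a₃♯⌟a₄♯⌟κ) + a₃∧(a₁♯⌟a₂♯⌟a₄♯⌟κ) − a₄∧(a₁♯⌟a₂♯⌟a₃♯⌟κ),
which (with linearity) determines it on all of Λ⁴. -/
def IsTripleContractionInto (κ : ExteriorAlgebra ℝ (Fin 8 → ℝ))
    (T3 : ExteriorAlgebra ℝ (Fin 8 → ℝ) →ₗ[ℝ] ExteriorAlgebra ℝ (Fin 8 → ℝ)) : Prop :=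
  ∀ i j k l : Fin 8,
    T3 (dx i * dx j * dx k * dx l) =
      dx i * ctr j (ctr k (ctr l κ)) - dx j * ctr i (ctr k (ctr l κ))
        + dx k * ctr i (ctr j (ctr l κ)) - dx l * ctr i (ctr j (ctr k κ))

/-! Both diamonds are explicit: α⋄Ω and β⋄Ω are each 4 times a signed sum of four basis
4-forms.  By linearity the triple contraction then reduces to sixteen iterated contractions of
basis monomials, evaluated with the derivation rule eᵢ⌟(dxⱼ∧x) = δᵢⱼ x − dxⱼ∧(eᵢ⌟x) and
anticommutativity of the dxᵢ. -/

@[simp] lemma dx_mul_self (i : Fin 8) : dx i * dx i = 0 := ExteriorAlgebra.ι_sq_zero _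

@[simp] lemma dx_mul_dx_mul_self (i : Fin 8) (x : ExteriorAlgebra ℝ (Fin 8 → ℝ)) :
    dx i * (dx i * x) = 0 := by
  rw [← mul_assoc, dx_mul_self, zero_mul]

lemma dx_mul_dx_comm (i j : Fin 8) : dx i * dx j = -(dx j * dx i) :=
  eq_neg_of_add_eq_zero_left (ExteriorAlgebra.ι_add_mul_swap _ _)

@[simp] lemma dx_mul_dx_of_lt {i j : Fin 8} (_ : j < i) : dx i * dx j = -(dx j * dx i) :=
  dx_mul_dx_comm i j

@[simp] lemma dx_mul_dx_mul_of_lt {i j : Fin 8} (_ : j < i)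
    (x : ExteriorAlgebra ℝ (Fin 8 → ℝ)) : dx i * (dx j * x) = -(dx j * (dx i * x)) := by
  rw [← mul_assoc, dx_mul_dx_comm, neg_mul, mul_assoc]

@[simp] lemma ctr_dx (i j : Fin 8) : ctr i (dx j) = if i = j then 1 else 0 := by
  simp [ctr, dx, CliffordAlgebra.contractLeft_ι, Pi.single_apply]

@[simp] lemma ctr_dx_mul (i j : Fin 8) (x : ExteriorAlgebra ℝ (Fin 8 → ℝ)) :
    ctr i (dx j * x) = (if i = j then x else 0) - dx j * ctr i x := by
  rw [ctr, dx, CliffordAlgebra.contractLeft_ι_mul]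
  by_cases h : i = j <;> simp [h]

lemma alpha_diamond_Ω : dia2 1 7 Ω + dia2 2 4 Ω =
    (4 : ℝ) • (dx 0 * dx 1 * dx 3 * dx 4) + (-4 : ℝ) • (dx 0 * dx 2 * dx 3 * dx 7)
      + (-4 : ℝ) • (dx 1 * dx 4 * dx 5 * dx 6) + (4 : ℝ) • (dx 2 * dx 5 * dx 6 * dx 7) := by
  simp [dia2, Ω, ω₁, ω₂, ω₃, mul_add, add_mul, mul_sub, sub_mul, mul_assoc]
  module

lemma beta_diamond_Ω : dia2 0 4 Ω - dia2 1 5 Ω =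
    (4 : ℝ) • (dx 0 * dx 2 * dx 3 * dx 5) + (4 : ℝ) • (dx 0 * dx 5 * dx 6 * dx 7)
      + (4 : ℝ) • (dx 1 * dx 2 * dx 3 * dx 4) + (4 : ℝ) • (dx 1 * dx 4 * dx 6 * dx 7) := by
  simp [dia2, Ω, ω₁, ω₂, ω₃, mul_add, add_mul, mul_sub, sub_mul, mul_assoc]
  module

theorem stmt_7
    (T3 : ExteriorAlgebra ℝ (Fin 8 → ℝ) →ₗ[ℝ] ExteriorAlgebra ℝ (Fin 8 → ℝ))
    (hT3 : IsTripleContractionInto (dia2 0 4 Ω - dia2 1 5 Ω) T3) :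
    T3 (dia2 1 7 Ω + dia2 2 4 Ω) = (32 : ℝ) • (-(dx 0 * dx 2) + dx 5 * dx 7) := by
  rw [beta_diamond_Ω] at hT3
  rw [alpha_diamond_Ω]
  simp only [map_add, map_smul, hT3 _ _ _ _]
  simp [mul_assoc]
  module

end
end

section
/- The function f(t) = arccos(tanh(128 t)) solves the ODE d/dt(cos f(t)) = 128(1 − cos²f(t)) on ℝ, and cos f(t) → 1 as t → ∞. Consequently the energy E(t) = 3584(1 − (4/7)cos f(t)) is strictly decreasing in t. -/
set_option maxHeartbeats 1000000


/- STATEMENT 15: f(t) = arccos(tanh(128t)) solves d/dt(cos f(t)) = 128(1 − cos²f(t))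
on ℝ, cos f(t) → 1 as t → ∞, and E(t) = 3584(1 − (4/7)cos f(t)) is strictly
decreasing in t. -/

noncomputable def fSol : ℝ → ℝ := fun t => Real.arccos (Real.tanh (128 * t))

noncomputable def Een : ℝ → ℝ := fun t => 3584 * (1 - (4 / 7) * Real.cos (fSol t))

lemma cosh_pos' (x : ℝ) : 0 < Real.cosh x := lt_of_lt_of_le one_pos (Real.one_le_cosh x)

lemma tanh_sq_lt_one (x : ℝ) : Real.tanh x ^ 2 < 1 := by
  have h := Real.cosh_sq_sub_sinh_sq x
  have hc := cosh_pos' x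
  rw [Real.tanh_eq_sinh_div_cosh, div_pow]
  rw [div_lt_one (by positivity)]
  nlinarith

lemma abs_tanh_le_one (x : ℝ) : -1 ≤ Real.tanh x ∧ Real.tanh x ≤ 1 := by
  have := tanh_sq_lt_one x
  constructor <;> nlinarith

lemma cos_fSol (t : ℝ) : Real.cos (fSol t) = Real.tanh (128 * t) := by
  have h := abs_tanh_le_one (128 * t)
  exact Real.cos_arccos h.1 h.2

lemma hasDerivAt_tanh' (x : ℝ) : HasDerivAt Real.tanh (1 - Real.tanh x ^ 2) x := by
  have hc := cosh_pos' x
  have h : HasDerivAt (fun y => Real.sinh y / Real.cosh y)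
      ((Real.cosh x * Real.cosh x - Real.sinh x * Real.sinh x) / Real.cosh x ^ 2) x :=
    (Real.hasDerivAt_sinh x).div (Real.hasDerivAt_cosh x) (ne_of_gt hc)
  have he : (fun y => Real.sinh y / Real.cosh y) = Real.tanh := by
    funext y; rw [Real.tanh_eq_sinh_div_cosh]
  rw [he] at h
  convert h using 1
  rw [Real.tanh_eq_sinh_div_cosh, div_pow]
  have h2 := Real.cosh_sq_sub_sinh_sq x
  field_simp

lemma tanh_strictMono : StrictMono Real.tanh := by
  apply strictMono_of_deriv_pos
  intro x
  rw [(hasDerivAt_tanh' x).deriv]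
  nlinarith [tanh_sq_lt_one x]

lemma tendsto_tanh_atTop : Filter.Tendsto Real.tanh Filter.atTop (nhds 1) := by
  have he : Real.tanh = fun x => (1 - Real.exp (-(2 * x))) / (1 + Real.exp (-(2 * x))) := by
    funext x
    rw [Real.tanh_eq_sinh_div_cosh, Real.sinh_eq, Real.cosh_eq]
    have h1 : Real.exp x > 0 := Real.exp_pos x
    have h2 : Real.exp (-x) > 0 := Real.exp_pos (-x)
    have h3 : Real.exp (-(2 * x)) = Real.exp (-x) * Real.exp (-x) := by
      rw [← Real.exp_add]; ring_nf
    have h4 : Real.exp x * Real.exp (-x) = 1 := by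
      rw [← Real.exp_add]; simp
    rw [div_div_div_eq, div_eq_div_iff (by positivity) (by positivity)]
    nlinarith
  rw [he]
  have h0 : Filter.Tendsto (fun x : ℝ => Real.exp (-(2 * x))) Filter.atTop (nhds 0) := by
    apply Real.tendsto_exp_atBot.comp
    have h2 : Filter.Tendsto (fun x : ℝ => 2 * x) Filter.atTop Filter.atTop :=
      Filter.tendsto_id.const_mul_atTop (by norm_num)
    exact Filter.tendsto_neg_atTop_atBot.comp h2
  have : Filter.Tendsto (fun x : ℝ => (1 - Real.exp (-(2 * x))) / (1 + Real.exp (-(2 * x))))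
      Filter.atTop (nhds ((1 - 0) / (1 + 0))) :=
    Filter.Tendsto.div ((tendsto_const_nhds).sub h0) ((tendsto_const_nhds).add h0) (by norm_num)
  simpa using this

theorem stmt_15 :
    (∀ t : ℝ, HasDerivAt (fun s => Real.cos (fSol s))
      (128 * (1 - Real.cos (fSol t) ^ 2)) t) ∧
    Filter.Tendsto (fun t => Real.cos (fSol t)) Filter.atTop (nhds 1) ∧
    StrictAnti Een := by
  have hkey : (fun s => Real.cos (fSol s)) = fun s => Real.tanh (128 * s) := by
    funext s; exact cos_fSol s
  refine ⟨?_, ?_, ?_⟩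
  · intro t
    rw [hkey, cos_fSol]
    have h : HasDerivAt (fun s : ℝ => Real.tanh (128 * s))
        ((1 - Real.tanh (128 * t) ^ 2) * 128) t :=
      (hasDerivAt_tanh' (128 * t)).comp t (by simpa using (hasDerivAt_id t).const_mul (128 : ℝ))
    convert h using 1; ring
  · rw [hkey]
    exact tendsto_tanh_atTop.comp (Filter.tendsto_atTop_atTop_of_monotone
      (fun a b h => by linarith) (fun b => ⟨b/128, by linarith⟩))
  · intro a b hab
    unfold Een
    rw [cos_fSol, cos_fSol]
    have := tanh_strictMono (by linarith : 128 * a < 128 * b)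
    nlinarith
end
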